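/- Let (R_1, …, R_{n+1}) be an exchangeable random vector of real-valued random variables that are almost surely pairwise distinct. Then the rank of R_{n+1} among R_1, …, R_{n+1}, i.e., the random variable #{i ∈ {1, …, n+1} : R_i ≤ R_{n+1}}, is uniformly distributed on {1, …, n+1}. -/

import Mathlib

/-!
By exchangeability, transposing `R i` with the last component shows that every component has
the same probability of having rank `j + 1`. When the components are distinct, their ranks are
a permutation of `1, …, n + 1`, so exactly one component has rank `j + 1`; the `n + 1` equal
probabilities therefore add up to `1`.
-/

open MeasureTheory

/-- A random vector `R` is exchangeable if every permutation of its components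
has the same joint distribution as the original. -/
def Exchangeable {Ω : Type*} [MeasurableSpace Ω] (P : Measure Ω) {m : ℕ}
    (R : Ω → Fin m → ℝ) : Prop :=
  ∀ π : Equiv.Perm (Fin m), Measure.map (fun ω => R ω ∘ π) P = Measure.map R P

open Finset

section Rank

variable {ι α : Type*} [Fintype ι] [LinearOrder α]

def rank (x : ι → α) (i : ι) : ℕ := #{k | x k ≤ x i}

theorem one_le_rank (x : ι → α) (i : ι) : 1 ≤ rank x i :=
  card_pos.2 ⟨i, by simp⟩

theorem rank_le_fintype_card (x : ι → α) (i : ι) : rank x i ≤ Fintype.card ι :=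
  card_filter_le _ _

theorem rank_comp_perm (x : ι → α) (π : Equiv.Perm ι) (i : ι) :
    rank (x ∘ π) i = rank x (π i) :=
  card_equiv π fun k => by simp

theorem rank_injective {x : ι → α} (hx : Function.Injective x) :
    Function.Injective (rank x) := by
  suffices h : ∀ a b, x a ≤ x b → rank x a = rank x b → a = b by
    intro a b hab
    rcases le_total (x a) (x b) with hle | hle
    exacts [h a b hle hab, (h b a hle hab.symm).symm]
  intro a b hle hab
  have hsub : ({k | x k ≤ x a} : Finset ι) ⊆ ({k | x k ≤ x b} : Finset ι) :=
    fun k => by simpa using fun hk : x k ≤ x a => hk.trans hle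
  have hb : b ∈ ({k | x k ≤ x a} : Finset ι) := by
    rw [eq_of_subset_of_card_le hsub hab.symm.le]
    simp
  exact hx (hle.antisymm (mem_filter.1 hb).2)

theorem existsUnique_rank_eq {x : ι → α} (hx : Function.Injective x) {m : ℕ}
    (hm1 : 1 ≤ m) (hm : m ≤ Fintype.card ι) : ∃! i, rank x i = m := by
  have himage : univ.image (rank x) = Icc 1 (Fintype.card ι) := by
    refine eq_of_subset_of_card_le (fun r hr => ?_) ?_
    · obtain ⟨i, -, rfl⟩ := mem_image.1 hr
      exact mem_Icc.2 ⟨one_le_rank x i, rank_le_fintype_card x i⟩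
    · rw [card_image_of_injective _ (rank_injective hx), Nat.card_Icc, card_univ]
      omega
  obtain ⟨i, -, hi⟩ := mem_image.1 (himage ▸ mem_Icc.2 ⟨hm1, hm⟩)
  exact ⟨i, hi, fun k hk => rank_injective hx (hk.trans hi.symm)⟩

variable [TopologicalSpace α] [MeasurableSpace α] [OpensMeasurableSpace α]
  [OrderClosedTopology α] [SecondCountableTopology α]

theorem measurable_rank (i : ι) : Measurable fun x : ι → α => rank x i := by
  simp only [rank, card_filter]
  exact Finset.measurable_sum _ fun k _ =>
    Measurable.ite (measurableSet_le (measurable_pi_apply k) (measurable_pi_apply i))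
      measurable_const measurable_const

end Rank

theorem sum_measure_eq_of_ae_existsUnique_mem {ι Ω : Type*} [Fintype ι] [MeasurableSpace Ω]
    {P : Measure Ω} {B : ι → Set Ω} (hB : ∀ i, NullMeasurableSet (B i) P)
    (h : ∀ᵐ ω ∂P, ∃! i, ω ∈ B i) : ∑ i, P (B i) = P Set.univ := by
  have hdisj : Pairwise (Function.onFun (AEDisjoint P) B) := fun a b hab =>
    measure_eq_zero_iff_ae_notMem.2 <| h.mono fun ω ⟨_, _, huniq⟩ hω =>
      hab ((huniq a hω.1).trans (huniq b hω.2).symm)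
  have hunion : ⋃ i, B i =ᵐ[P] (Set.univ : Set Ω) := ae_eq_univ.2 <|
    measure_eq_zero_iff_ae_notMem.2 <| h.mono fun ω ⟨i, hi, _⟩ hω =>
      hω (Set.mem_iUnion.2 ⟨i, hi⟩)
  rw [← tsum_fintype (L := .unconditional _), ← measure_iUnion₀ hdisj hB, measure_congr hunion]

theorem Exchangeable.measure_rank_eq {Ω : Type*} [MeasurableSpace Ω] {P : Measure Ω} {m : ℕ}
    {R : Ω → Fin m → ℝ} (hexch : Exchangeable P R) (hR : Measurable R)
    (π : Equiv.Perm (Fin m)) (i : Fin m) (r : ℕ) :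
    P {ω | rank (R ω) (π i) = r} = P {ω | rank (R ω) i = r} := by
  have hS : MeasurableSet {x : Fin m → ℝ | rank x i = r} :=
    measurable_rank i (measurableSet_singleton r)
  have hRπ : Measurable fun ω => R ω ∘ π :=
    measurable_pi_iff.2 fun k => (measurable_pi_apply (π k)).comp hR
  calc P {ω | rank (R ω) (π i) = r}
      = Measure.map (fun ω => R ω ∘ π) P {x | rank x i = r} := by
        simp only [Measure.map_apply hRπ hS, Set.preimage_ofPred_eq, rank_comp_perm]
    _ = P {ω | rank (R ω) i = r} := by
        rw [hexch π, Measure.map_apply hR hS, Set.preimage_ofPred_eq]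

/-- For an exchangeable random vector `(R 0, …, R n)` with almost surely pairwise
distinct components, the rank of the last component `R n` among all the `n + 1`
components, i.e. `#{i : R i ≤ R n}`, is uniformly distributed on `{1, …, n + 1}`:
each value `j + 1` (for `j : Fin (n + 1)`) has probability `1/(n + 1)`. -/
theorem rank_uniform_of_exchangeable {Ω : Type*} [MeasurableSpace Ω]
    (P : Measure Ω) [IsProbabilityMeasure P] (n : ℕ) (R : Ω → Fin (n + 1) → ℝ)
    (hR : Measurable R) (hexch : Exchangeable P R)
    (hdist : ∀ᵐ ω ∂P, Function.Injective (R ω)) (j : Fin (n + 1)) :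
    P {ω | (Finset.univ.filter fun i => R ω i ≤ R ω (Fin.last n)).card = (j : ℕ) + 1} =
      1 / ((n + 1 : ℕ) : ENNReal) := by
  set B : Fin (n + 1) → Set Ω := fun i => {ω | rank (R ω) i = j + 1}
  have hB : ∀ i, MeasurableSet (B i) := fun i =>
    (measurable_rank i).comp hR (measurableSet_singleton _)
  have hequal : ∀ i, P (B i) = P (B (Fin.last n)) := fun i => by
    simpa using hexch.measure_rank_eq hR (Equiv.swap (Fin.last n) i) (Fin.last n) (j + 1)
  have hunique : ∀ᵐ ω ∂P, ∃! i, ω ∈ B i := hdist.mono fun ω hω =>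
    existsUnique_rank_eq hω (Nat.le_add_left 1 j) (by simpa using j.isLt)
  have hsum := sum_measure_eq_of_ae_existsUnique_mem (fun i => (hB i).nullMeasurableSet) hunique
  simp only [hequal, sum_const, card_univ, Fintype.card_fin, nsmul_eq_mul, measure_univ] at hsum
  exact (ENNReal.eq_div_iff (by simp) (ENNReal.natCast_ne_top _)).2 hsum
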